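/- arXiv:1710.06003 — 3 statements merged into one kernel-verified Lean document; each statement's English description precedes it below -/
import Mathlib

section
/- Let R be a left noetherian ring, (F_i)_{i∈I} a family of flat right R-modules, and M a left R-module. Then the natural map (∏_i F_i) ⊗_R M → ∏_i (F_i ⊗_R M) is injective. -/
open TensorProduct

noncomputable section

section NCTensor

variable (R : Type u) [Ring R]

/-- The subgroup of `F ⊗[ℤ] M` by which one divides to obtain the tensor
product `F ⊗[R] M` of a right `R`-module `F` and a left `R`-module `M`. -/
def balancedRel (F : Type u) [AddCommGroup F] [Module Rᵐᵒᵖ F]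
    (M : Type u) [AddCommGroup M] [Module R M] : Submodule ℤ (F ⊗[ℤ] M) :=
  Submodule.span ℤ {x | ∃ (r : R) (f : F) (m : M),
    x = (MulOpposite.op r • f) ⊗ₜ[ℤ] m - f ⊗ₜ[ℤ] (r • m)}

/-- The tensor product `F ⊗[R] M` (an abelian group) of a right `R`-module `F`
and a left `R`-module `M` over a possibly noncommutative ring `R`. -/
def NCTensor (F : Type u) [AddCommGroup F] [Module Rᵐᵒᵖ F]
    (M : Type u) [AddCommGroup M] [Module R M] : Type u :=
  (F ⊗[ℤ] M) ⧸ balancedRel R F M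

instance (F : Type u) [AddCommGroup F] [Module Rᵐᵒᵖ F]
    (M : Type u) [AddCommGroup M] [Module R M] : AddCommGroup (NCTensor R F M) :=
  inferInstanceAs (AddCommGroup ((F ⊗[ℤ] M) ⧸ balancedRel R F M))

variable {R}

/-- The elementary tensor `f ⊗ m` in `NCTensor R F M`. -/
def NCTensor.mk {F : Type u} [AddCommGroup F] [Module Rᵐᵒᵖ F]
    {M : Type u} [AddCommGroup M] [Module R M] (f : F) (m : M) : NCTensor R F M :=
  Submodule.Quotient.mk (f ⊗ₜ[ℤ] m)

/-- Functoriality of `NCTensor` in the left-module variable: `1 ⊗ g`. -/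
def NCTensor.mapRight {F : Type u} [AddCommGroup F] [Module Rᵐᵒᵖ F]
    {M M' : Type u} [AddCommGroup M] [Module R M] [AddCommGroup M'] [Module R M']
    (g : M →ₗ[R] M') : NCTensor R F M →+ NCTensor R F M' :=
  (Submodule.mapQ (balancedRel R F M) (balancedRel R F M')
    (LinearMap.lTensor F (g.restrictScalars ℤ))
    (by
      rw [balancedRel, Submodule.span_le]
      rintro x ⟨r, f, m, rfl⟩
      simp only [SetLike.mem_coe, Submodule.mem_comap, map_sub,
        LinearMap.lTensor_tmul, LinearMap.coe_restrictScalars]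
      exact Submodule.subset_span ⟨r, f, g m, by
        erw [map_sub, LinearMap.lTensor_tmul, LinearMap.lTensor_tmul]
        simp [g.map_smul]⟩)).toAddMonoidHom

/-- Functoriality of `NCTensor` in the right-module variable: `e ⊗ 1`. -/
def NCTensor.mapLeft {F F' : Type u} [AddCommGroup F] [Module Rᵐᵒᵖ F]
    [AddCommGroup F'] [Module Rᵐᵒᵖ F']
    {M : Type u} [AddCommGroup M] [Module R M]
    (e : F →ₗ[Rᵐᵒᵖ] F') : NCTensor R F M →+ NCTensor R F' M :=
  (Submodule.mapQ (balancedRel R F M) (balancedRel R F' M)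
    (LinearMap.rTensor M (e.restrictScalars ℤ))
    (by
      rw [balancedRel, Submodule.span_le]
      rintro x ⟨r, f, m, rfl⟩
      simp only [SetLike.mem_coe, Submodule.mem_comap, map_sub,
        LinearMap.rTensor_tmul, LinearMap.coe_restrictScalars]
      exact Submodule.subset_span ⟨r, e f, m, by
        erw [map_sub, LinearMap.rTensor_tmul, LinearMap.rTensor_tmul]
        simp [e.map_smul]⟩)).toAddMonoidHom

variable (R) in
/-- A right `R`-module `F` is flat if tensoring with `F` preserves injectivity
of maps of left `R`-modules (equivalently, `F ⊗[R] –` is exact). -/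
def RightModuleFlat (F : Type u) [AddCommGroup F] [Module Rᵐᵒᵖ F] : Prop :=
  ∀ (M M' : Type u) [AddCommGroup M] [Module R M] [AddCommGroup M'] [Module R M']
    (g : M →ₗ[R] M'), Function.Injective g → Function.Injective (NCTensor.mapRight (F := F) g)

end NCTensor

/-- The natural map `(∏ i, F i) ⊗[R] M → ∏ i, (F i ⊗[R] M)`,
sending `(f_i)_i ⊗ m` to `(f_i ⊗ m)_i`. -/
def piTensorCompare (R : Type u) [Ring R] (ι : Type u) (F : ι → Type u)
    [∀ i, AddCommGroup (F i)] [∀ i, Module Rᵐᵒᵖ (F i)]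
    (M : Type u) [AddCommGroup M] [Module R M] :
    NCTensor R (∀ i, F i) M →+ ∀ i, NCTensor R (F i) M :=
  (Submodule.liftQ (balancedRel R (∀ i, F i) M)
    (LinearMap.pi fun i => (balancedRel R (F i) M).mkQ ∘ₗ
      LinearMap.rTensor M (LinearMap.proj (R := ℤ) (φ := F) i))
    (by
      rw [balancedRel, Submodule.span_le]
      rintro x ⟨r, f, m, rfl⟩
      refine LinearMap.mem_ker.2 (funext fun i => ?_)
      have h : (MulOpposite.op r • f i) ⊗ₜ[ℤ] m - (f i) ⊗ₜ[ℤ] (r • m) ∈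
          balancedRel R (F i) M := Submodule.subset_span ⟨r, f i, m, rfl⟩
      erw [LinearMap.pi_apply, LinearMap.comp_apply, map_sub, LinearMap.rTensor_tmul,
        LinearMap.rTensor_tmul]
      simpa [map_sub, LinearMap.rTensor_tmul, Submodule.Quotient.mk_eq_zero]
        using (Submodule.Quotient.mk_eq_zero _).2 h)).toAddMonoidHom

/-!
Every element of `(∏ i, F i) ⊗[R] M` comes from `(∏ i, F i) ⊗[R] N` for a finitely generated
submodule `N ≤ M`, and since each `F i` is flat, `F i ⊗[R] N → F i ⊗[R] M` is injective; so it
suffices to treat `N`. As `R` is left noetherian, `N` is finitely presented,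
`Rᵐ → Rⁿ → N → 0`. For finite free modules the comparison map is bijective because
`G ⊗[R] Rⁿ ≃ Gⁿ`, and right exactness of `G ⊗[R] -` turns this into
injectivity for `N` by a diagram chase.
-/

namespace NCTensor

variable {R : Type u} [Ring R] {F : Type u} [AddCommGroup F] [Module Rᵐᵒᵖ F]
  {M N P : Type u} [AddCommGroup M] [Module R M] [AddCommGroup N] [Module R N]
  [AddCommGroup P] [Module R P]

theorem mk_add_left (f f' : F) (m : M) : mk (R := R) (f + f') m = mk f m + mk f' m := by
  rw [mk, TensorProduct.add_tmul]
  rfl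

theorem mk_sum_right {ι : Type*} (s : Finset ι) (f : F) (m : ι → M) :
    mk (R := R) f (∑ j ∈ s, m j) = ∑ j ∈ s, mk f (m j) := by
  rw [mk, TensorProduct.tmul_sum]
  exact map_sum (balancedRel R F M).mkQ _ s

theorem mk_zero_left (m : M) : mk (R := R) (0 : F) m = 0 := by
  rw [mk, TensorProduct.zero_tmul]
  rfl

theorem mk_op_smul (r : R) (f : F) (m : M) :
    mk (R := R) (MulOpposite.op r • f) m = mk f (r • m) :=
  sub_eq_zero.1 <| (Submodule.Quotient.mk_eq_zero _).2 <| Submodule.subset_span ⟨r, f, m, rfl⟩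

@[elab_as_elim]
theorem induction_on {motive : NCTensor R F M → Prop} (x : NCTensor R F M)
    (zero : motive 0) (mk : ∀ f m, motive (mk f m))
    (add : ∀ a b, motive a → motive b → motive (a + b)) : motive x := by
  obtain ⟨t, rfl⟩ := Submodule.Quotient.mk_surjective _ x
  induction t using TensorProduct.induction_on with
  | zero => exact zero
  | tmul f m => exact mk f m
  | add a b ha hb => exact add _ _ ha hb

def lift {A : Type*} [AddCommGroup A] (b : F →+ M →+ A)
    (hb : ∀ (r : R) (f : F) (m : M), b (MulOpposite.op r • f) m = b f (r • m)) :
    NCTensor R F M →+ A :=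
  ((balancedRel R F M).liftQ
    (TensorProduct.liftAddHom b fun z f m => by
      simp only [map_zsmul, AddMonoidHom.zsmul_apply]).toIntLinearMap
    (Submodule.span_le.2 <| by
      rintro _ ⟨r, f, m, rfl⟩
      simp [TensorProduct.liftAddHom_tmul, hb])).toAddMonoidHom

theorem lift_mk {A : Type*} [AddCommGroup A] (b : F →+ M →+ A)
    (hb : ∀ (r : R) (f : F) (m : M), b (MulOpposite.op r • f) m = b f (r • m))
    (f : F) (m : M) :
    lift b hb (mk (R := R) f m) = b f m :=
  rfl

variable (R F) in
def piScalarRight (n : ℕ) : NCTensor R F (Fin n → R) ≃+ (Fin n → F) where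
  toFun := lift
    { toFun f :=
        { toFun c j := MulOpposite.op (c j) • f
          map_zero' := by ext; simp
          map_add' c c' := by ext; simp [add_smul] }
      map_zero' := by ext; simp
      map_add' f f' := by ext; simp [smul_add] }
    fun r f c => by ext; simp [smul_smul]
  invFun v := ∑ j, mk (v j) (Pi.single j 1)
  left_inv x := by
    induction x using induction_on with
    | zero => simp [mk_zero_left]
    | mk f c =>
      simp only [lift_mk, AddMonoidHom.coe_mk, ZeroHom.coe_mk, mk_op_smul]
      rw [← mk_sum_right]
      congr 1
      ext k
      simp [Finset.sum_apply, Pi.single_apply]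
    | add a b ha hb =>
      simp only [map_add, Pi.add_apply, mk_add_left, Finset.sum_add_distrib, ha, hb]
  right_inv v := by
    ext k
    simp [lift_mk, Pi.single_apply, apply_ite MulOpposite.op, ite_smul]
  map_add' := map_add _

theorem mapRight_comp_apply (g : M →ₗ[R] N) (g' : N →ₗ[R] P) (x : NCTensor R F M) :
    mapRight (F := F) (g' ∘ₗ g) x = mapRight g' (mapRight g x) := by
  induction x using induction_on with
  | zero => simp only [map_zero]
  | mk f m => rfl
  | add a b ha hb => simp only [map_add, ha, hb]

theorem mapRight_surjective {g : M →ₗ[R] N} (hg : Function.Surjective g) :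
    Function.Surjective (mapRight (F := F) g) := by
  intro y
  obtain ⟨t, rfl⟩ := Submodule.Quotient.mk_surjective _ y
  obtain ⟨u, rfl⟩ := LinearMap.lTensor_surjective F (g := g.restrictScalars ℤ) hg t
  exact ⟨Submodule.Quotient.mk u, rfl⟩

theorem exists_fg_mapRight_subtype_eq (x : NCTensor R F M) :
    ∃ N : Submodule R M, N.FG ∧ ∃ y, mapRight (F := F) N.subtype y = x := by
  induction x using induction_on with
  | zero => exact ⟨⊥, Submodule.fg_bot, 0, map_zero _⟩
  | mk f m => exact ⟨R ∙ m, Submodule.fg_span_singleton m,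
      mk f ⟨m, Submodule.mem_span_singleton_self m⟩, rfl⟩
  | add a b ha hb =>
    obtain ⟨N₁, hN₁, y₁, rfl⟩ := ha
    obtain ⟨N₂, hN₂, y₂, rfl⟩ := hb
    refine ⟨N₁ ⊔ N₂, hN₁.sup hN₂, mapRight (Submodule.inclusion le_sup_left) y₁ +
      mapRight (Submodule.inclusion le_sup_right) y₂, ?_⟩
    rw [map_add, ← mapRight_comp_apply, ← mapRight_comp_apply, Submodule.subtype_comp_inclusion,
      Submodule.subtype_comp_inclusion]

/-- The relations of `F ⊗[ℤ] P` lift along `h`, so this reduces to right exactness of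
`F ⊗[ℤ] -`. -/
theorem exact_mapRight {g : M →ₗ[R] N} {h : N →ₗ[R] P} (hgh : Function.Exact g h)
    (hh : Function.Surjective h) :
    Function.Exact (mapRight (F := F) g) (mapRight (F := F) h) := by
  have hZ : Function.Exact (LinearMap.lTensor F (g.restrictScalars ℤ))
      (LinearMap.lTensor F (h.restrictScalars ℤ)) := lTensor_exact F hgh hh
  intro y
  obtain ⟨t, rfl⟩ := Submodule.Quotient.mk_surjective _ y
  constructor
  · intro hy
    have hrel : balancedRel R F P ≤
        (balancedRel R F N).map (LinearMap.lTensor F (h.restrictScalars ℤ)) := by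
      refine Submodule.span_le.2 ?_
      rintro _ ⟨r, f, p, rfl⟩
      obtain ⟨n, rfl⟩ := hh p
      exact ⟨_, Submodule.subset_span ⟨r, f, n, rfl⟩, by simp⟩
    obtain ⟨b, hb, hbt⟩ := hrel ((Submodule.Quotient.mk_eq_zero _).1 hy)
    obtain ⟨u, hu⟩ := (hZ (t - b)).1 (by rw [map_sub, sub_eq_zero]; exact hbt.symm)
    refine ⟨Submodule.Quotient.mk u, ?_⟩
    refine (congrArg Submodule.Quotient.mk hu).trans ?_
    rw [Submodule.Quotient.mk_sub, (Submodule.Quotient.mk_eq_zero _).2 hb, sub_zero]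
  · rintro ⟨z, hz⟩
    obtain ⟨u, rfl⟩ := Submodule.Quotient.mk_surjective _ z
    rw [← hz]
    change Submodule.Quotient.mk (LinearMap.lTensor F _ (LinearMap.lTensor F _ u)) = 0
    rw [hZ.apply_apply_eq_zero]
    rfl

end NCTensor

section Compare

variable {R : Type u} [Ring R] {ι : Type u} {F : ι → Type u}
  [∀ i, AddCommGroup (F i)] [∀ i, Module Rᵐᵒᵖ (F i)]
  {M N : Type u} [AddCommGroup M] [Module R M] [AddCommGroup N] [Module R N]

theorem piTensorCompare_mapRight (g : M →ₗ[R] N) (x : NCTensor R (∀ i, F i) M) (i : ι) :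
    piTensorCompare R ι F N (NCTensor.mapRight g x) i
      = NCTensor.mapRight g (piTensorCompare R ι F M x i) := by
  induction x using NCTensor.induction_on with
  | zero => simp only [map_zero, Pi.zero_apply]
  | mk f m => rfl
  | add a b ha hb => simp only [map_add, Pi.add_apply, ha, hb]

theorem piScalarRight_piTensorCompare (n : ℕ) (x : NCTensor R (∀ i, F i) (Fin n → R)) (i : ι)
    (j : Fin n) :
    NCTensor.piScalarRight R (F i) n (piTensorCompare R ι F _ x i) j
      = NCTensor.piScalarRight R (∀ i, F i) n x j i := by
  induction x using NCTensor.induction_on with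
  | zero => simp only [map_zero, Pi.zero_apply]
  | mk f m => rfl
  | add a b ha hb => simp only [map_add, Pi.add_apply, ha, hb]

theorem piTensorCompare_bijective_fin (n : ℕ) :
    Function.Bijective (piTensorCompare R ι F (Fin n → R)) := by
  let e := (NCTensor.piScalarRight R (∀ i, F i) n).toEquiv.trans <| (Equiv.piComm _).trans <|
    Equiv.piCongrRight fun i => (NCTensor.piScalarRight R (F i) n).symm.toEquiv
  convert e.bijective
  ext x i
  refine (NCTensor.piScalarRight R (F i) n).injective (funext fun j => ?_)
  rw [piScalarRight_piTensorCompare]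
  simp [e]

theorem piTensorCompare_injective_of_finitePresentation [Module.FinitePresentation R M] :
    Function.Injective (piTensorCompare R ι F M) := by
  obtain ⟨n, m, π, ρ, hπ, hρπ⟩ := Module.FinitePresentation.exists_fin' R M
  have hexact (G : Type u) [AddCommGroup G] [Module Rᵐᵒᵖ G] :
      Function.Exact (NCTensor.mapRight (F := G) ρ) (NCTensor.mapRight π) :=
    NCTensor.exact_mapRight hρπ hπ
  rw [injective_iff_map_eq_zero]
  intro x hx
  obtain ⟨y, rfl⟩ := NCTensor.mapRight_surjective hπ x
  have hy (i : ι) : piTensorCompare R ι F _ y i ∈ Set.range (NCTensor.mapRight ρ) :=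
    (hexact (F i) _).1 (by rw [← piTensorCompare_mapRight, hx, Pi.zero_apply])
  choose w hw using hy
  obtain ⟨W, hW⟩ := (piTensorCompare_bijective_fin m).2 w
  have hWy : NCTensor.mapRight ρ W = y := (piTensorCompare_bijective_fin n).1 <| funext fun i => by
    rw [piTensorCompare_mapRight, hW, hw]
  rw [← hWy]
  exact (hexact _).apply_apply_eq_zero W

end Compare

/-- If `R` is left noetherian, `(F i)` a family of flat right `R`-modules and
`M` a left `R`-module, then the natural map
`(∏ i, F i) ⊗[R] M → ∏ i, (F i ⊗[R] M)` is injective. -/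
theorem stmt_8 (R : Type u) [Ring R] [IsNoetherianRing R]
    (ι : Type u) (F : ι → Type u) [∀ i, AddCommGroup (F i)] [∀ i, Module Rᵐᵒᵖ (F i)]
    (hF : ∀ i, RightModuleFlat R (F i))
    (M : Type u) [AddCommGroup M] [Module R M] :
    Function.Injective (piTensorCompare R ι F M) := by
  rw [injective_iff_map_eq_zero]
  intro x hx
  obtain ⟨N, hN, y, rfl⟩ := NCTensor.exists_fg_mapRight_subtype_eq x
  have : Module.Finite R N := Module.Finite.iff_fg.2 hN
  have : Module.FinitePresentation R N := Module.finitePresentation_of_finite R N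
  have hy : piTensorCompare R ι F N y = 0 := funext fun i =>
    hF i N M N.subtype N.injective_subtype <| by
      rw [← piTensorCompare_mapRight, hx, Pi.zero_apply, Pi.zero_apply, map_zero]
  have hy0 : y = 0 :=
    (injective_iff_map_eq_zero _).1 piTensorCompare_injective_of_finitePresentation y hy
  rw [hy0, map_zero]

end
end

section
/- Let G be a group acting on a tree T (without inversions) such that the quotient G\T is a single edge with two distinct vertices v₁, v₂ joined by an edge e. Then G is the amalgamated free product of the stabilizers of v₁ and v₂ along the stabilizer of e. -/
/-!
Surjectivity: the image `H` of the amalgam contains both vertex stabilizers. As there is one orbit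
of edges, every neighbour of `vᵢ` is a `Stab(vᵢ)`-translate of the other end, so the
`H`-translates of `v₁` and `v₂` are closed under adjacency and exhaust the tree. Since `v₁` and
`v₂` lie in different orbits, `g • v₁ = h • v₁` for some `h ∈ H`, and `h⁻¹ g ∈ Stab(v₁) ≤ H`.

Injectivity: by the normal form theorem it suffices that a nonempty reduced word `g₁ ⋯ gₙ`, with
letters alternately in `Stab(v₁) ∖ Stab(e)` and `Stab(v₂) ∖ Stab(e)`, does not lie in `Stab(e)`.
Such a word moves the edge along a path of length `n` without backtracking, which in a tree cannot
return to `e`.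
-/

/-- The pair of vertex stabilizers, indexed by `Bool`. -/
def stabFam (G : Type u) [Group G] {V : Type u} [MulAction G V] (v₁ v₂ : V) :
    Bool → Subgroup G :=
  fun b => bif b then MulAction.stabilizer G v₁ else MulAction.stabilizer G v₂

/-- The inclusions of the edge stabilizer (the stabilizer of the edge `{v₁,v₂}`,
for an action without inversions) into the two vertex stabilizers. -/
def edgeInc (G : Type u) [Group G] {V : Type u} [MulAction G V] (v₁ v₂ : V) :
    ∀ b : Bool,
      ↥(MulAction.stabilizer G v₁ ⊓ MulAction.stabilizer G v₂) →* ↥(stabFam G v₁ v₂ b)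
  | true => Subgroup.inclusion inf_le_left
  | false => Subgroup.inclusion inf_le_right

/-- The canonical homomorphism from the amalgamated free product of the two
vertex stabilizers along the edge stabilizer to `G`. -/
def amalgToG (G : Type u) [Group G] {V : Type u} [MulAction G V] (v₁ v₂ : V) :
    Monoid.PushoutI (edgeInc G v₁ v₂) →* G :=
  Monoid.PushoutI.lift (fun b => (stabFam G v₁ v₂ b).subtype)
    (MulAction.stabilizer G v₁ ⊓ MulAction.stabilizer G v₂).subtype
    (by intro b; cases b <;> (ext x; rfl))

theorem SimpleGraph.IsAcyclic.mem_support_of_adj {V : Type*} {G : SimpleGraph V}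
    (hG : G.IsAcyclic) {a b c : V} (hab : G.Adj a b) (hac : G.Adj a c) (hbc : b ≠ c)
    (p : G.Walk b c) : a ∈ p.support := by
  have hmem : s(a, c) ∈ (SimpleGraph.Walk.cons hab p).edges :=
    SimpleGraph.isBridge_iff_forall_walk_mem_edges.1 (isAcyclic_iff_forall_adj_isBridge.1 hG hac) _
  rw [SimpleGraph.Walk.edges_cons, List.mem_cons] at hmem
  rcases hmem with h | h
  · exact absurd (Sym2.congr_right.1 h).symm hbc
  · exact p.fst_mem_support_of_mem_edges h

open Monoid in
theorem Monoid.PushoutI.lift_injective_of_reduced {ι : Type*} {G : ι → Type*} {H K : Type*}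
    [∀ i, Group (G i)] [Group H] [Group K] {φ : ∀ i, H →* G i}
    (hφ : ∀ i, Function.Injective (φ i)) (f : ∀ i, G i →* K) (k : H →* K)
    (hfk : ∀ i, (f i).comp (φ i) = k) (hk : Function.Injective k)
    (hred : ∀ w : CoprodI.Word G, Reduced φ w → CoprodI.lift f w.prod ∈ k.range → w = .empty) :
    Function.Injective (lift f k hfk) := by
  classical
  obtain ⟨d⟩ := NormalWord.transversal_nonempty φ hφ
  have lift_ofCoprodI : (lift f k hfk).comp ofCoprodI = CoprodI.lift f :=
    CoprodI.ext_hom _ _ fun i => by ext g; simp [ofCoprodI_of]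
  rw [injective_iff_map_eq_one]
  intro x hx
  let w : NormalWord d := x • .empty
  have hwx : w.prod = x := by simp [w, NormalWord.prod_smul]
  -- letters of a normal word lie in the transversal, which meets the base only in `1`
  have hw : Reduced φ w.toWord := by
    rintro ⟨i, g⟩ hg hrange
    refine w.ne_one _ hg ?_
    have := (d.compl i).1 (a₁ := (⟨g, hrange⟩, ⟨1, d.one_mem i⟩))
      (a₂ := (⟨1, 1, map_one _⟩, ⟨g, w.normalized i _ hg⟩)) (by simp)
    exact congrArg (fun z => z.1.1) this
  have hprod : k w.head * CoprodI.lift f w.toWord.prod = 1 := by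
    rw [← hx, ← hwx, NormalWord.prod, map_mul, lift_base, ← lift_ofCoprodI]; rfl
  have hempty : w.toWord = .empty :=
    hred _ hw ⟨w.head⁻¹, by rw [map_inv, inv_eq_of_mul_eq_one_right hprod]⟩
  have hhead : w.head = 1 := hk (by simpa [hempty] using hprod)
  rw [← hwx, NormalWord.prod, hhead, hempty]
  simp

theorem SimpleGraph.Preconnected.mem_of_adj_closed {V : Type*} {G : SimpleGraph V}
    (hG : G.Preconnected) {S : Set V} {v : V} (hv : v ∈ S)
    (hS : ∀ x y, G.Adj x y → x ∈ S → y ∈ S) (y : V) : y ∈ S := by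
  obtain ⟨p⟩ := hG v y
  induction p with
  | nil => exact hv
  | cons h _ ih => exact ih (hS _ _ h hv)

universe u

open SimpleGraph Monoid

section TreeAction

variable {V G : Type u} [Group G] [MulAction G V] {T : SimpleGraph V} {v₁ v₂ : V}

theorem adj_cond (he : T.Adj v₁ v₂) (b : Bool) : T.Adj (cond b v₁ v₂) (cond (!b) v₁ v₂) := by
  cases b
  exacts [he.symm, he]

theorem smul_cond_ne (hdist : ¬∃ g : G, g • v₁ = v₂) (g : G) (b : Bool) :
    g • cond b v₁ v₂ ≠ cond (!b) v₁ v₂ := by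
  cases b
  · exact fun h => hdist ⟨g⁻¹, inv_smul_eq_iff.2 h.symm⟩
  · exact fun h => hdist ⟨g, h⟩

theorem mem_stabFam_iff {b : Bool} {g : G} :
    g ∈ stabFam G v₁ v₂ b ↔ g • cond b v₁ v₂ = cond b v₁ v₂ := by
  cases b <;> exact MulAction.mem_stabilizer_iff

theorem mem_range_edgeInc_iff {b : Bool} (s : stabFam G v₁ v₂ b) :
    s ∈ (edgeInc G v₁ v₂ b).range ↔ (s : G) • cond (!b) v₁ v₂ = cond (!b) v₁ v₂ := by
  cases b
  · exact ⟨fun ⟨t, ht⟩ => ht ▸ t.2.1, fun h => ⟨⟨s, h, s.2⟩, rfl⟩⟩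
  · exact ⟨fun ⟨t, ht⟩ => ht ▸ t.2.2, fun h => ⟨⟨s, s.2, h⟩, rfl⟩⟩

theorem edgeInc_injective (b : Bool) : Function.Injective (edgeInc G v₁ v₂ b) := by
  cases b
  exacts [Subgroup.inclusion_injective inf_le_right, Subgroup.inclusion_injective inf_le_left]

@[simp]
theorem amalgToG_of (b : Bool) (s : stabFam G v₁ v₂ b) :
    amalgToG G v₁ v₂ (PushoutI.of b s) = s := by
  unfold amalgToG
  rw [PushoutI.lift_of]
  rfl

theorem exists_mem_stabilizer_smul_eq_of_adj (hdist : ¬∃ g : G, g • v₁ = v₂)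
    (hedge : ∀ a b : V, T.Adj a b →
      ∃ g : G, (g • a = v₁ ∧ g • b = v₂) ∨ (g • a = v₂ ∧ g • b = v₁))
    {b : Bool} {z : V} (hz : T.Adj (cond b v₁ v₂) z) :
    ∃ t ∈ MulAction.stabilizer G (cond b v₁ v₂), t • cond (!b) v₁ v₂ = z := by
  obtain ⟨t, ht⟩ := hedge _ _ hz
  cases b <;> rcases ht with ⟨h₁, h₂⟩ | ⟨h₁, h₂⟩ <;>
    first
    | exact absurd h₁ (smul_cond_ne hdist t _)
    | exact ⟨t⁻¹, inv_mem (MulAction.mem_stabilizer_iff.2 h₁), inv_smul_eq_iff.2 h₂.symm⟩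

/-- The path stays on the `cond b v₁ v₂` side of the edge; this is what rules out backtracking
when the next letter is prepended. -/
theorem exists_isPath_of_reduced
    (hact : ∀ (g : G) (a b : V), T.Adj a b → T.Adj (g • a) (g • b))
    (hT : T.IsAcyclic) (he : T.Adj v₁ v₂)
    (w : CoprodI.Word fun b => stabFam G v₁ v₂ b) (hw : PushoutI.Reduced (edgeInc G v₁ v₂) w)
    (b : Bool) (hb : w.fstIdx ≠ some (!b)) :
    ∃ c : Bool, ∃ p : T.Walk (cond b v₁ v₂)
        (CoprodI.lift (fun b => (stabFam G v₁ v₂ b).subtype) w.prod • cond c v₁ v₂),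
      p.IsPath ∧ p.length = w.toList.length ∧ cond (!b) v₁ v₂ ∉ p.support := by
  classical
  induction w using CoprodI.Word.consRecOn generalizing b with
  | empty =>
    rw [CoprodI.Word.prod_empty, map_one]
    refine ⟨b, Walk.nil.copy rfl (one_smul G _).symm, ?_, ?_, ?_⟩
    · rw [Walk.isPath_copy]; exact .nil
    · rw [Walk.length_copy]; rfl
    · simpa [Walk.support_copy] using (adj_cond he b).ne'
  | cons i m w hfst hm ih =>
    obtain rfl : i = b := by cases i <;> cases b <;> simp_all
    obtain ⟨c, p, hp, hlen, hnot⟩ :=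
      ih (fun l hl => hw l (List.mem_cons_of_mem _ hl)) (!i) (by rwa [Bool.not_not])
    rw [Bool.not_not] at hnot
    set g : G := (m : G)
    have hfix : g • cond i v₁ v₂ = cond i v₁ v₂ := mem_stabFam_iff.1 m.2
    have hmove : g • cond (!i) v₁ v₂ ≠ cond (!i) v₁ v₂ :=
      (mem_range_edgeInc_iff m).not.1 (hw ⟨i, m⟩ List.mem_cons_self)
    have hadj : T.Adj (cond i v₁ v₂) (g • cond (!i) v₁ v₂) := hfix ▸ hact g _ _ (adj_cond he i)
    let f : T →g T := ⟨(g • ·), hact g _ _⟩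
    have hf : Function.Injective f := MulAction.injective g
    have hmap : ∀ {x}, x ∈ (p.map f).support ↔ g⁻¹ • x ∈ p.support := by
      intro x
      rw [Walk.support_map, List.mem_map]
      exact ⟨fun ⟨u, hu, hux⟩ => hux ▸ (inv_smul_smul g u).symm ▸ hu,
        fun hx => ⟨_, hx, smul_inv_smul g x⟩⟩
    refine ⟨c, (Walk.cons hadj (p.map f)).copy rfl (by simp [g, mul_smul, f]), ?_, ?_, ?_⟩
    · rw [Walk.isPath_copy, Walk.cons_isPath_iff, hmap, inv_smul_eq_iff.2 hfix.symm]
      exact ⟨hp.map hf, hnot⟩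
    · simp [hlen]
    · rw [Walk.support_copy, Walk.support_cons, List.mem_cons, hmap, not_or]
      refine ⟨(adj_cond he i).ne', fun hu => hnot ?_⟩
      have hadj' : T.Adj (cond i v₁ v₂) (g⁻¹ • cond (!i) v₁ v₂) :=
        inv_smul_eq_iff.2 hfix.symm ▸ hact g⁻¹ _ _ (adj_cond he i)
      have hne : cond (!i) v₁ v₂ ≠ g⁻¹ • cond (!i) v₁ v₂ :=
        fun h => hmove (eq_inv_smul_iff.1 h)
      exact p.support_takeUntil_subset_support hu
        (hT.mem_support_of_adj (adj_cond he i) hadj' hne (p.takeUntil _ hu))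

theorem eq_empty_of_reduced_of_mem_stabilizer_inf
    (hact : ∀ (g : G) (a b : V), T.Adj a b → T.Adj (g • a) (g • b))
    (hT : T.IsAcyclic) (he : T.Adj v₁ v₂)
    (w : CoprodI.Word fun b => stabFam G v₁ v₂ b) (hw : PushoutI.Reduced (edgeInc G v₁ v₂) w)
    (hmem : CoprodI.lift (fun b => (stabFam G v₁ v₂ b).subtype) w.prod ∈
      MulAction.stabilizer G v₁ ⊓ MulAction.stabilizer G v₂) :
    w = .empty := by
  obtain ⟨b, hb⟩ : ∃ b : Bool, w.fstIdx ≠ some (!b) := by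
    cases w.fstIdx with
    | none => exact ⟨true, nofun⟩
    | some i => exact ⟨i, by simp⟩
  obtain ⟨c, p, hp, hlen, hnot⟩ := exists_isPath_of_reduced hact hT he w hw b hb
  have hfix : ∀ c : Bool, CoprodI.lift (fun b => (stabFam G v₁ v₂ b).subtype) w.prod •
      cond c v₁ v₂ = cond c v₁ v₂ := by
    intro c
    cases c
    exacts [hmem.2, hmem.1]
  rcases Bool.eq_or_eq_not c b with rfl | rfl
  · have hnil : (p.copy rfl (hfix c)).Nil := Walk.isPath_iff_nil.1 (by rwa [Walk.isPath_copy])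
    rw [← Walk.length_eq_zero_iff, Walk.length_copy, hlen] at hnil
    exact CoprodI.Word.ext (List.length_eq_zero_iff.1 hnil)
  · have hend := (p.copy rfl (hfix (!b))).end_mem_support
    rw [Walk.support_copy] at hend
    exact absurd hend hnot

theorem amalgToG_injective (hact : ∀ (g : G) (a b : V), T.Adj a b → T.Adj (g • a) (g • b))
    (hT : T.IsAcyclic) (he : T.Adj v₁ v₂) :
    Function.Injective (amalgToG G v₁ v₂) :=
  PushoutI.lift_injective_of_reduced edgeInc_injective _ _ _ (Subgroup.subtype_injective _)
    fun w hw hmem => eq_empty_of_reduced_of_mem_stabilizer_inf hact hT he w hw (by simpa using hmem)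

theorem amalgToG_surjective (hact : ∀ (g : G) (a b : V), T.Adj a b → T.Adj (g • a) (g • b))
    (hT : T.Connected) (hdist : ¬∃ g : G, g • v₁ = v₂)
    (hedge : ∀ a b : V, T.Adj a b →
      ∃ g : G, (g • a = v₁ ∧ g • b = v₂) ∨ (g • a = v₂ ∧ g • b = v₁)) :
    Function.Surjective (amalgToG G v₁ v₂) := by
  set H := (amalgToG G v₁ v₂).range
  have hstab : ∀ b, MulAction.stabilizer G (cond b v₁ v₂) ≤ H := fun b g hg =>
    ⟨PushoutI.of b ⟨g, mem_stabFam_iff.2 hg⟩, amalgToG_of b _⟩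
  have hcover : ∀ y, ∃ h ∈ H, ∃ b, h • cond b v₁ v₂ = y := by
    refine hT.preconnected.mem_of_adj_closed ⟨1, one_mem H, true, one_smul G v₁⟩ ?_
    rintro x y hxy ⟨h, hH, b, rfl⟩
    have hadj : T.Adj (cond b v₁ v₂) (h⁻¹ • y) := by
      simpa using hact h⁻¹ _ _ hxy
    obtain ⟨t, ht, hty⟩ := exists_mem_stabilizer_smul_eq_of_adj hdist hedge hadj
    exact ⟨h * t, mul_mem hH (hstab b ht), !b, by rw [mul_smul, hty, smul_inv_smul]⟩
  refine fun g => MonoidHom.mem_range.1 ?_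
  obtain ⟨h, hH, b, hb⟩ := hcover (g • v₁)
  cases b
  · exact absurd (by rw [mul_smul, hb, inv_smul_smul]; rfl) (smul_cond_ne hdist (g⁻¹ * h) false)
  · have hg : h⁻¹ * g ∈ MulAction.stabilizer G v₁ := by
      rw [MulAction.mem_stabilizer_iff, mul_smul, ← hb, inv_smul_smul]; rfl
    simpa only [mul_inv_cancel_left] using mul_mem hH (hstab true hg)

end TreeAction

theorem stmt_12_general (V : Type u) (T : SimpleGraph V) (hT : T.IsTree)
    (G : Type u) [Group G] [MulAction G V]
    -- `G` acts on the graph `T`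
    (hact : ∀ (g : G) (a b : V), T.Adj a b → T.Adj (g • a) (g • b))
    (v₁ v₂ : V) (he : T.Adj v₁ v₂)
    (hdist : ¬∃ g : G, g • v₁ = v₂)
    -- every edge is in the orbit of the edge `{v₁, v₂}`
    (hedge : ∀ a b : V, T.Adj a b →
      ∃ g : G, (g • a = v₁ ∧ g • b = v₂) ∨ (g • a = v₂ ∧ g • b = v₁)) :
    Function.Bijective (amalgToG G v₁ v₂) :=
  ⟨amalgToG_injective hact hT.isAcyclic he, amalgToG_surjective hact hT.connected hdist hedge⟩

/-- (Serre) Let a group `G` act on a tree `T` without inversions, such that the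
quotient `G\T` is a single edge with two distinct vertices, represented by
adjacent vertices `v₁, v₂` of `T`.  Then the canonical map from the
amalgamated free product of the stabilizers of `v₁` and `v₂` along the
stabilizer of the edge `{v₁, v₂}` to `G` is an isomorphism:
`G = Stab(v₁) *_{Stab(e)} Stab(v₂)`. -/
theorem stmt_12 (V : Type u) (T : SimpleGraph V) (hT : T.IsTree)
    (G : Type u) [Group G] [MulAction G V]
    -- `G` acts on the graph `T`
    (hact : ∀ (g : G) (a b : V), T.Adj a b → T.Adj (g • a) (g • b))
    -- the action is without inversions
    (hnoinv : ∀ (g : G) (a b : V), T.Adj a b → ¬(g • a = b ∧ g • b = a))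
    (v₁ v₂ : V) (he : T.Adj v₁ v₂)
    -- every vertex is in the orbit of `v₁` or of `v₂`, and these orbits differ
    (hvert : ∀ v : V, (∃ g : G, g • v = v₁) ∨ (∃ g : G, g • v = v₂))
    (hdist : ¬∃ g : G, g • v₁ = v₂)
    -- every edge is in the orbit of the edge `{v₁, v₂}`
    (hedge : ∀ a b : V, T.Adj a b →
      ∃ g : G, (g • a = v₁ ∧ g • b = v₂) ∨ (g • a = v₂ ∧ g • b = v₁)) :
    Function.Bijective (amalgToG G v₁ v₂) :=
  stmt_12_general V T hT G hact v₁ v₂ he hdist hedge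
end

section
/- Let R be a ring such that every finitely generated left ideal of R is finitely presented. Then for any two finitely generated left ideals I, J of R, the intersection I ∩ J is a finitely generated left ideal. -/
/-- If every finitely generated left ideal of `R` is finitely presented as a
left `R`-module, then the intersection of two finitely generated left ideals is
a finitely generated left ideal. -/
theorem stmt_19 (R : Type u) [Ring R]
    (hcoh : ∀ I : Ideal R, I.FG → Module.FinitePresentation R I)
    (I J : Ideal R) (hI : I.FG) (hJ : J.FG) :
    (I ⊓ J).FG := by
  have hIJ : (I ⊔ J).FG := Submodule.FG.sup hI hJ
  haveI : Module.FinitePresentation R (I ⊔ J : Ideal R) := hcoh _ hIJ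
  haveI : Module.Finite R I := Module.Finite.iff_fg.mpr hI
  haveI : Module.Finite R J := Module.Finite.iff_fg.mpr hJ
  -- the addition map I × J → I + J
  let l : (I × J) →ₗ[R] (I ⊔ J : Ideal R) :=
    (Submodule.inclusion le_sup_left).comp (LinearMap.fst R I J)
      + (Submodule.inclusion le_sup_right).comp (LinearMap.snd R I J)
  have hl : Function.Surjective l := by
    rintro ⟨z, hz⟩
    obtain ⟨x, hx, y, hy, rfl⟩ := Submodule.mem_sup.mp hz
    exact ⟨(⟨x, hx⟩, ⟨y, hy⟩), rfl⟩
  have hker : (LinearMap.ker l).FG := Module.FinitePresentation.fg_ker l hl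
  -- project the kernel into R via the first coordinate
  let g : (I × J) →ₗ[R] R := I.subtype.comp (LinearMap.fst R I J)
  have : I ⊓ J = (LinearMap.ker l).map g := by
    ext z
    constructor
    · rintro ⟨hzI, hzJ⟩
      refine ⟨(⟨z, hzI⟩, ⟨-z, neg_mem hzJ⟩), ?_, rfl⟩
      simp only [LinearMap.mem_ker, l]
      ext
      simp
    · rintro ⟨⟨x, y⟩, hxy, rfl⟩
      simp only [LinearMap.mem_ker, l] at hxy
      have hxy' : (x : R) + (y : R) = 0 := congrArg Subtype.val hxy
      refine ⟨x.2, ?_⟩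
      have : (x : R) = -(y : R) := eq_neg_of_add_eq_zero_left hxy'
      simp only [g, LinearMap.comp_apply, LinearMap.fst_apply, Submodule.subtype_apply, this]; exact neg_mem y.2
  rw [this]
  exact hker.map g
end
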